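/- arXiv:2504.05943 — 5 statements merged into one kernel-verified Lean document; each statement's English description precedes it below -/
import Mathlib

section
/- Let k ≥ 0, let n, m be nonnegative integers, and let ε be an integer with 0 ≤ ε ≤ δ_k(n+m). Then ∂_k(n) ≤ m − ε if and only if n ≤ ∂^k(n+m). -/
/-- Fold a function `g` over the terms `(a_t, t)` of the unique Macaulay-type
representation `n = C(a_{k+1}, k+1) + ⋯ + C(a_i, i)` with
`a_{k+1} > ⋯ > a_i ≥ i ≥ 1`, computed greedily: at each level `t` (from `k+1`
down), `a_t` is the largest `a` with `C(a, t) ≤` the current remainder. -/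
def macRepFold (g : ℕ → ℕ → ℕ) : ℕ → ℕ → ℕ
  | 0, _ => 0
  | t + 1, n =>
    if n = 0 then 0
    else
      let a := Nat.findGreatest (fun a => Nat.choose a (t + 1) ≤ n) (n + t + 1)
      g a (t + 1) + macRepFold g t (n - Nat.choose a (t + 1))

/-- The combinatorial shadow function `∂_k(n) = Σ_t C(a_t, t - 1)`. -/
def partialLower (k n : ℕ) : ℕ := macRepFold (fun a t => Nat.choose a (t - 1)) (k + 1) n

/-- The combinatorial shadow function `∂^k(n) = Σ_t C(a_t - 1, t)`. -/
def partialUpper (k n : ℕ) : ℕ := macRepFold (fun a t => Nat.choose (a - 1) t) (k + 1) n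

/-- The error function `δ_k(n) = #{t : a_t = t}`. -/
def deltaErr (k n : ℕ) : ℕ := macRepFold (fun a t => if a = t then 1 else 0) (k + 1) n

/-- The function `d^k(n) = Σ_t C(a_t + 1, t)`. -/
def dUpper (k n : ℕ) : ℕ := macRepFold (fun a t => Nat.choose (a + 1) t) (k + 1) n


/-! Write `N = n + m = Σ C(a_t, t)` and `U = ∂^k(N)`. The terms `C(a_t - 1, t)` with `a_t > t` form
the representation of `U`, so Pascal's rule `C(a, t) = C(a - 1, t) + C(a - 1, t - 1)` gives
`U + δ_k(N) + ∂_k(U) = N` and `N ≤ U + ∂_k(U + 1)`. As `∂_k` is monotone, `n ≤ U` yields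
`∂_k(n) ≤ ∂_k(U) = N - U - δ_k(N) ≤ m - δ_k(N)`, while `U < n` yields
`∂_k(n) ≥ ∂_k(U + 1) ≥ N - U > m`. -/

lemma le_choose_succ_add (a t : ℕ) : a ≤ a.choose (t + 1) + t := by
  induction a with
  | zero => omega
  | succ a ih =>
    rw [Nat.choose_succ_succ']
    rcases lt_or_ge a t with h | h
    · omega
    · have := Nat.choose_pos h
      omega

section macRepFold

variable (g : ℕ → ℕ → ℕ)

@[simp]
lemma macRepFold_zero_right (s : ℕ) : macRepFold g s 0 = 0 := by
  cases s <;> rfl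

lemma findGreatest_choose_le_choose_add {t a r : ℕ} (hr : r < a.choose t) :
    Nat.findGreatest (fun b => b.choose (t + 1) ≤ a.choose (t + 1) + r)
      (a.choose (t + 1) + r + t + 1) = a := by
  refine Nat.findGreatest_eq_iff.2 ⟨by have := le_choose_succ_add a t; omega, fun _ => by omega, ?_⟩
  intro b hab _ hb
  have := Nat.choose_le_choose (t + 1) (hab : a + 1 ≤ b)
  rw [Nat.choose_succ_succ'] at this
  omega

lemma macRepFold_choose_add {t a r : ℕ} (ha : t + 1 ≤ a) (hr : r < a.choose t) :
    macRepFold g (t + 1) (a.choose (t + 1) + r) = g a (t + 1) + macRepFold g t r := by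
  have := Nat.choose_pos ha
  simp only [macRepFold, findGreatest_choose_le_choose_add hr, Nat.add_sub_cancel_left]
  exact if_neg (by omega)

end macRepFold

lemma exists_eq_choose_add (t : ℕ) {n : ℕ} (hn : n ≠ 0) :
    ∃ a r, t + 1 ≤ a ∧ r < a.choose t ∧ n = a.choose (t + 1) + r := by
  let P (b : ℕ) : Prop := b.choose (t + 1) ≤ n
  have hP : P (t + 1) := by simp only [P, Nat.choose_self]; omega
  set a := Nat.findGreatest P (n + t + 1)
  have ha : t + 1 ≤ a := Nat.le_findGreatest (by omega) hP
  have hPa : P a := Nat.findGreatest_spec (by omega) hP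
  have hPa' : ¬ P (a + 1) :=
    Nat.findGreatest_is_greatest (Nat.lt_succ_self a) (by have := le_choose_succ_add a t; omega)
  simp only [P, not_le, Nat.choose_succ_succ'] at hPa hPa'
  exact ⟨a, n - a.choose (t + 1), ha, by omega, by omega⟩

def partialLowerAt (s : ℕ) : ℕ → ℕ := macRepFold (fun a t => Nat.choose a (t - 1)) s

def partialUpperAt (s : ℕ) : ℕ → ℕ := macRepFold (fun a t => Nat.choose (a - 1) t) s

def deltaErrAt (s : ℕ) : ℕ → ℕ := macRepFold (fun a t => if a = t then 1 else 0) s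

@[simp]
lemma partialLowerAt_zero_left (n : ℕ) : partialLowerAt 0 n = 0 := rfl

@[simp]
lemma partialLowerAt_zero_right (s : ℕ) : partialLowerAt s 0 = 0 := macRepFold_zero_right _ s

@[simp]
lemma partialUpperAt_zero_left (n : ℕ) : partialUpperAt 0 n = 0 := rfl

@[simp]
lemma partialUpperAt_zero_right (s : ℕ) : partialUpperAt s 0 = 0 := macRepFold_zero_right _ s

@[simp]
lemma deltaErrAt_zero_right (s : ℕ) : deltaErrAt s 0 = 0 := macRepFold_zero_right _ s

lemma partialLowerAt_choose_add {t a r : ℕ} (ha : t + 1 ≤ a) (hr : r < a.choose t) :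
    partialLowerAt (t + 1) (a.choose (t + 1) + r) = a.choose t + partialLowerAt t r :=
  macRepFold_choose_add _ ha hr

lemma partialUpperAt_choose_add {t b r : ℕ} (hb : t ≤ b) (hr : r < (b + 1).choose t) :
    partialUpperAt (t + 1) ((b + 1).choose (t + 1) + r) = b.choose (t + 1) + partialUpperAt t r :=
  macRepFold_choose_add _ (by omega) hr

lemma deltaErrAt_choose_add {t b r : ℕ} (hb : t ≤ b) (hr : r < (b + 1).choose t) :
    deltaErrAt (t + 1) ((b + 1).choose (t + 1) + r) =
      (if b = t then 1 else 0) + deltaErrAt t r := by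
  simp only [deltaErrAt, macRepFold_choose_add _ (by omega : t + 1 ≤ b + 1) hr, Nat.add_right_cancel_iff]

lemma partialUpperAt_lt_choose {s b n : ℕ} (hb : s ≤ b) (hn : n < (b + 1).choose s) :
    partialUpperAt s n < b.choose s := by
  induction s generalizing b n with
  | zero => simp
  | succ s ih =>
    rcases eq_or_ne n 0 with rfl | hn0
    · simpa using Nat.choose_pos hb
    obtain ⟨a, r, ha, hr, rfl⟩ := exists_eq_choose_add s hn0
    obtain ⟨c, rfl⟩ : ∃ c, a = c + 1 := ⟨a - 1, by omega⟩
    have hcb : c + 1 < b + 1 := (Nat.choose_mono (s + 1)).reflect_lt (by omega)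
    have hx := ih (by omega) hr
    rw [partialUpperAt_choose_add (by omega) hr]
    calc c.choose (s + 1) + partialUpperAt s r < c.choose (s + 1) + c.choose s := by omega
      _ = (c + 1).choose (s + 1) := by rw [Nat.choose_succ_succ', Nat.add_comm]
      _ ≤ b.choose (s + 1) := Nat.choose_le_choose _ (by omega)

lemma choose_add_partialLowerAt_le {s c r : ℕ} (hr : r < c.choose s) :
    c.choose s + partialLowerAt s r ≤ (c + 1).choose s := by
  induction s generalizing c r with
  | zero => simp
  | succ s ih =>
    rcases eq_or_ne r 0 with rfl | hr0
    · simpa using Nat.choose_le_succ c (s + 1)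
    obtain ⟨d, q, hd, hq, rfl⟩ := exists_eq_choose_add s hr0
    have hdc : d + 1 ≤ c := (Nat.choose_mono (s + 1)).reflect_lt (by omega)
    have := (ih hq).trans (Nat.choose_le_choose s hdc)
    rw [partialLowerAt_choose_add hd hq, Nat.choose_succ_succ' c]
    omega

lemma partialLowerAt_succ_le_choose {s a n : ℕ} (hn : n < a.choose (s + 1)) :
    partialLowerAt (s + 1) n ≤ a.choose s := by
  rcases eq_or_ne n 0 with rfl | hn0
  · simp
  obtain ⟨c, r, hc, hr, rfl⟩ := exists_eq_choose_add s hn0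
  have hca : c + 1 ≤ a := (Nat.choose_mono (s + 1)).reflect_lt (by omega)
  rw [partialLowerAt_choose_add hc hr]
  exact (choose_add_partialLowerAt_le hr).trans (Nat.choose_le_choose s hca)

lemma partialLowerAt_monotone (s : ℕ) : Monotone (partialLowerAt s) := by
  induction s with
  | zero => exact fun _ _ _ => le_rfl
  | succ s ih =>
    refine monotone_nat_of_le_succ fun n => ?_
    obtain ⟨a, r, ha, hr, hn⟩ := exists_eq_choose_add s n.add_one_ne_zero
    rw [hn, partialLowerAt_choose_add ha hr]
    rcases r with _ | r
    · rw [partialLowerAt_zero_right, add_zero]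
      exact partialLowerAt_succ_le_choose (by omega)
    · rw [show n = a.choose (s + 1) + r by omega, partialLowerAt_choose_add ha (by omega)]
      exact Nat.add_le_add_left (ih r.le_succ) _

lemma partialUpperAt_add_deltaErrAt_add_partialLowerAt {s n : ℕ} (h : n = 0 ∨ 0 < s) :
    partialUpperAt s n + deltaErrAt s n + partialLowerAt s (partialUpperAt s n) = n := by
  induction s generalizing n with
  | zero =>
    obtain rfl : n = 0 := by omega
    simp
  | succ s ih =>
    rcases eq_or_ne n 0 with rfl | hn0
    · simp
    obtain ⟨a, r, ha, hr, rfl⟩ := exists_eq_choose_add s hn0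
    obtain ⟨b, rfl⟩ : ∃ b, a = b + 1 := ⟨a - 1, by omega⟩
    have hb : s ≤ b := by omega
    have hx := partialUpperAt_lt_choose hb hr
    have hr_eq := ih (n := r) (by rcases s with _ | s <;> simp_all)
    rw [partialUpperAt_choose_add hb hr, deltaErrAt_choose_add hb hr, Nat.choose_succ_succ' b]
    rcases hb.eq_or_lt with rfl | hsb
    · obtain hx0 : partialUpperAt s r = 0 := by simpa using hx
      simp [hx0] at hr_eq ⊢
      omega
    · rw [partialLowerAt_choose_add hsb hx, if_neg hsb.ne']
      omega

lemma le_partialUpperAt_add_partialLowerAt_succ {s n : ℕ} (h : n = 0 ∨ 0 < s) :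
    n ≤ partialUpperAt s n + partialLowerAt s (partialUpperAt s n + 1) := by
  induction s generalizing n with
  | zero => omega
  | succ s ih =>
    rcases eq_or_ne n 0 with rfl | hn0
    · simp
    obtain ⟨a, r, ha, hr, rfl⟩ := exists_eq_choose_add s hn0
    obtain ⟨b, rfl⟩ : ∃ b, a = b + 1 := ⟨a - 1, by omega⟩
    have hb : s ≤ b := by omega
    have hx := partialUpperAt_lt_choose hb hr
    rw [partialUpperAt_choose_add hb hr, Nat.choose_succ_succ' b]
    have hr_le := ih (n := r) (by rcases s with _ | s <;> simp_all)
    set x := partialUpperAt s r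
    rcases (Nat.add_one_le_of_lt hx).eq_or_lt with hx1 | hx1
    · have hpascal : b.choose (s + 1) + x + 1 = (b + 1).choose (s + 1) + 0 := by
        rw [Nat.choose_succ_succ']
        omega
      rw [hpascal, partialLowerAt_choose_add ha (Nat.choose_pos (by omega)),
        partialLowerAt_zero_right]
      omega
    · have hsb : s + 1 ≤ b := by
        by_contra! hbs
        obtain rfl : b = s := by omega
        rw [Nat.choose_self] at hx1
        omega
      rw [Nat.add_assoc _ x 1, partialLowerAt_choose_add hsb hx1]
      omega

/-- Theorem 1.3(a): for `0 ≤ ε ≤ δ_k(n+m)`,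
`∂_k(n) ≤ m − ε` if and only if `n ≤ ∂^k(n+m)`. -/
theorem partialLower_le_iff_le_partialUpper (k n m : ℕ) (ε : ℤ)
    (hε0 : 0 ≤ ε) (hε : ε ≤ (deltaErr k (n + m) : ℤ)) :
    (partialLower k n : ℤ) ≤ (m : ℤ) - ε ↔ n ≤ partialUpper k (n + m) := by
  set N := n + m
  have hsum : partialUpper k N + deltaErr k N + partialLower k (partialUpper k N) = N :=
    partialUpperAt_add_deltaErrAt_add_partialLowerAt (Or.inr k.succ_pos)
  have hle : N ≤ partialUpper k N + partialLower k (partialUpper k N + 1) :=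
    le_partialUpperAt_add_partialLowerAt_succ (Or.inr k.succ_pos)
  constructor
  · intro h
    by_contra! hlt
    have : partialLower k (partialUpper k N + 1) ≤ partialLower k n :=
      partialLowerAt_monotone (k + 1) hlt
    omega
  · intro h
    have : partialLower k n ≤ partialLower k (partialUpper k N) :=
      partialLowerAt_monotone (k + 1) h
    omega
end

section
/- Let k ≥ 0 and let n, m be nonnegative integers. Then ∂_k(n) = m if and only if n = ∂^k(n+m) and δ_k(n+m) = 0. -/
open Finset

lemma macRepFold_zero (g : ℕ → ℕ → ℕ) (j : ℕ) : macRepFold g j 0 = 0 := by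
  cases j <;> simp [macRepFold]

lemma sub_le_choose' (a j : ℕ) : a - j ≤ a.choose (j + 1) := by
  induction a with
  | zero => simp
  | succ a ih =>
    rcases le_or_gt a j with h | h
    · rcases le_or_gt (a + 1) j with h2 | h2
      · simp [Nat.sub_eq_zero_of_le h2]
      · have hj : j = a := by omega
        subst hj
        simp
    · have hpos : 0 < a.choose j := Nat.choose_pos (le_of_lt h)
      have hcs : (a + 1).choose (j + 1) = a.choose j + a.choose (j + 1) :=
        Nat.choose_succ_succ a j
      omega

lemma rep_sum_lt (j : ℕ) : ∀ (a : ℕ → ℕ) (i : ℕ), 1 ≤ i → i ≤ j →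
    (∀ s, i ≤ s → s ≤ j → s ≤ a s) →
    (∀ s, i ≤ s → s < j → a s < a (s + 1)) →
    (∑ s ∈ Icc i j, (a s).choose s) < (a j + 1).choose j := by
  induction j with
  | zero => intro a i h1 h2 _ _; omega
  | succ j ih =>
    intro a i h1 h2 hge hlt
    rw [Finset.sum_Icc_succ_top h2]
    have haj : j + 1 ≤ a (j + 1) := hge _ h2 le_rfl
    have hpos : 0 < (a (j + 1)).choose j := Nat.choose_pos (by omega)
    have key : (∑ s ∈ Icc i j, (a s).choose s) < (a (j + 1)).choose j := by
      rcases le_or_gt i j with h | h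
      · have h1' := ih a i h1 h (fun s hs1 hs2 => hge s hs1 (by omega))
          (fun s hs1 hs2 => hlt s hs1 (by omega))
        have h2' : (a j + 1).choose j ≤ (a (j + 1)).choose j :=
          Nat.choose_le_choose j (hlt j h (by omega))
        omega
      · rw [Finset.Icc_eq_empty (by omega)]
        simpa using hpos
    have hcs : (a (j + 1) + 1).choose (j + 1)
        = (a (j + 1)).choose j + (a (j + 1)).choose (j + 1) :=
      Nat.choose_succ_succ (a (j + 1)) j
    omega

lemma macRepFold_rep (g : ℕ → ℕ → ℕ) (j : ℕ) : ∀ (a : ℕ → ℕ) (i : ℕ), 1 ≤ i → i ≤ j →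
    (∀ s, i ≤ s → s ≤ j → s ≤ a s) →
    (∀ s, i ≤ s → s < j → a s < a (s + 1)) →
    macRepFold g j (∑ s ∈ Icc i j, (a s).choose s) = ∑ s ∈ Icc i j, g (a s) s := by
  induction j with
  | zero => intro a i h1 h2; omega
  | succ j ih =>
    intro a i h1 h2 hge hlt
    set n := ∑ s ∈ Icc i (j + 1), (a s).choose s with hn
    have hsplit : n = (∑ s ∈ Icc i j, (a s).choose s) + (a (j + 1)).choose (j + 1) :=
      Finset.sum_Icc_succ_top h2 _
    have haj : j + 1 ≤ a (j + 1) := hge _ h2 le_rfl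
    have hposTop : 0 < (a (j + 1)).choose (j + 1) := Nat.choose_pos haj
    have hnpos : n ≠ 0 := by omega
    have hub : ∑ s ∈ Icc i j, (a s).choose s < (a (j + 1)).choose j := by
      rcases le_or_gt i j with h | h
      · have h1' := rep_sum_lt j a i h1 h (fun s hs1 hs2 => hge s hs1 (by omega))
          (fun s hs1 hs2 => hlt s hs1 (by omega))
        have h2' : (a j + 1).choose j ≤ (a (j + 1)).choose j :=
          Nat.choose_le_choose j (hlt j h (by omega))
        omega
      · rw [Finset.Icc_eq_empty (by omega)]
        simpa using Nat.choose_pos (show j ≤ a (j + 1) by omega)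
    have hlt_n : n < (a (j + 1) + 1).choose (j + 1) := by
      have hcs : (a (j + 1) + 1).choose (j + 1)
          = (a (j + 1)).choose j + (a (j + 1)).choose (j + 1) :=
        Nat.choose_succ_succ (a (j + 1)) j
      omega
    have hAle : a (j + 1) ≤ n + j := by
      have h1' := sub_le_choose' (a (j + 1)) j
      omega
    have hfg : Nat.findGreatest (fun x => x.choose (j + 1) ≤ n) (n + j + 1) = a (j + 1) := by
      rw [Nat.findGreatest_eq_iff]
      refine ⟨by omega, fun _ => by omega, fun b hb1 hb2 => ?_⟩
      have : (a (j + 1) + 1).choose (j + 1) ≤ b.choose (j + 1) :=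
        Nat.choose_le_choose _ (by omega)
      omega
    have hrem : n - (a (j + 1)).choose (j + 1) = ∑ s ∈ Icc i j, (a s).choose s := by omega
    rw [macRepFold]
    simp only [if_neg hnpos, hfg, hrem]
    rw [Finset.sum_Icc_succ_top h2 (fun s => g (a s) s)]
    rcases le_or_gt i j with h | h
    · rw [ih a i h1 h (fun s hs1 hs2 => hge s hs1 (by omega))
        (fun s hs1 hs2 => hlt s hs1 (by omega))]
      omega
    · rw [Finset.Icc_eq_empty (by omega)]
      simp [macRepFold_zero]

lemma exists_rep (j : ℕ) : ∀ n, 1 ≤ j → 1 ≤ n →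
    ∃ (i : ℕ) (a : ℕ → ℕ), 1 ≤ i ∧ i ≤ j ∧
      (∀ s, i ≤ s → s ≤ j → s ≤ a s) ∧
      (∀ s, i ≤ s → s < j → a s < a (s + 1)) ∧
      n = ∑ s ∈ Icc i j, (a s).choose s := by
  induction j with
  | zero => omega
  | succ j ih =>
    intro n _ hn
    have hA1 : (j + 1).choose (j + 1) ≤ n := by simpa using hn
    set A := Nat.findGreatest (fun x => x.choose (j + 1) ≤ n) (n + j + 1) with hA
    have hAspec : A.choose (j + 1) ≤ n := by
      rw [hA]
      exact Nat.findGreatest_spec (P := fun x => x.choose (j + 1) ≤ n)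
        (m := j + 1) (n := n + j + 1) (by omega) hA1
    have hAge : j + 1 ≤ A := by
      rw [hA]
      exact Nat.le_findGreatest (P := fun x => x.choose (j + 1) ≤ n)
        (n := n + j + 1) (by omega) hA1
    have hAmax : n < (A + 1).choose (j + 1) := by
      by_contra h
      push_neg at h
      have hb : A + 1 ≤ n + j + 1 := by
        have h2 := sub_le_choose' (A + 1) j
        omega
      exact Nat.findGreatest_is_greatest (lt_add_one A) hb h
    have hcs : (A + 1).choose (j + 1) = A.choose j + A.choose (j + 1) :=
      Nat.choose_succ_succ A j
    set r := n - A.choose (j + 1) with hrdef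
    have hr : r < A.choose j := by omega
    rcases Nat.eq_zero_or_pos r with h0 | hrpos
    · refine ⟨j + 1, fun _ => A, by omega, le_rfl, ?_, ?_, ?_⟩
      · intro s hs1 hs2
        show s ≤ A
        omega
      · intro s hs1 hs2
        omega
      · rw [Finset.Icc_self, Finset.sum_singleton]
        show n = A.choose (j + 1)
        omega
    · have hj : 1 ≤ j := by
        by_contra h
        have hj0 : j = 0 := by omega
        rw [hj0] at hr
        simp at hr
        omega
      obtain ⟨i, a, hi1, hij, hge, hmono, hsum⟩ := ih r hj hrpos
      have htop_le : (a j).choose j ≤ r := by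
        rw [hsum]
        exact Finset.single_le_sum (f := fun s => (a s).choose s)
          (fun s _ => Nat.zero_le _) (Finset.mem_Icc.mpr ⟨hij, le_rfl⟩)
      have hajA : a j < A := by
        by_contra h
        push_neg at h
        have := Nat.choose_le_choose j h
        omega
      set a' : ℕ → ℕ := fun s => if s = j + 1 then A else a s with ha'
      have ha'top : a' (j + 1) = A := by simp [ha']
      have ha'low : ∀ s, s ≤ j → a' s = a s := by
        intro s hs
        simp only [ha']
        rw [if_neg (by omega)]
      refine ⟨i, a', hi1, by omega, ?_, ?_, ?_⟩
      · intro s hs1 hs2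
        rcases Nat.lt_or_ge s (j + 1) with h | h
        · rw [ha'low s (by omega)]
          exact hge s hs1 (by omega)
        · have hs : s = j + 1 := by omega
          rw [hs, ha'top]
          omega
      · intro s hs1 hs2
        have hsle : s ≤ j := by omega
        rw [ha'low s hsle]
        rcases Nat.lt_or_ge (s + 1) (j + 1) with h | h
        · rw [ha'low (s + 1) (by omega)]
          exact hmono s hs1 (by omega)
        · have hs : s = j := by omega
          rw [show s + 1 = j + 1 by omega, ha'top, hs]
          exact hajA
      · rw [Finset.sum_Icc_succ_top (by omega), ha'top]
        have heq : ∑ s ∈ Icc i j, (a' s).choose s = ∑ s ∈ Icc i j, (a s).choose s := by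
          refine Finset.sum_congr rfl fun s hs => ?_
          rw [Finset.mem_Icc] at hs
          rw [ha'low s hs.2]
        rw [heq, ← hsum]
        omega

/-- Theorem 1.3(c): `∂_k(n) = m` if and only if `n = ∂^k(n+m)` and `δ_k(n+m) = 0`. -/
theorem partialLower_eq_iff (k n m : ℕ) :
    partialLower k n = m ↔ n = partialUpper k (n + m) ∧ deltaErr k (n + m) = 0 := by
  constructor
  · rintro rfl
    rcases Nat.eq_zero_or_pos n with h0 | hn
    · subst h0
      simp [partialLower, partialUpper, deltaErr, macRepFold_zero]
    · obtain ⟨i, a, hi1, hik, hge, hmono, hsum⟩ := exists_rep (k + 1) n (by omega) hn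
      have hL : partialLower k n = ∑ s ∈ Icc i (k + 1), (a s).choose (s - 1) := by
        rw [partialLower, hsum]
        exact macRepFold_rep _ _ a i hi1 hik hge hmono
      have hNsum : n + partialLower k n = ∑ s ∈ Icc i (k + 1), (a s + 1).choose s := by
        rw [hL]
        conv_lhs => rw [hsum]
        rw [← Finset.sum_add_distrib]
        refine Finset.sum_congr rfl fun s hs => ?_
        rw [Finset.mem_Icc] at hs
        obtain ⟨t, rfl⟩ : ∃ t, s = t + 1 := ⟨s - 1, by omega⟩
        rw [Nat.choose_succ_succ (a (t + 1)) t]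
        simp [Nat.add_comm]
      have hge' : ∀ s, i ≤ s → s ≤ k + 1 → s ≤ a s + 1 := fun s h1 h2 => by
        have := hge s h1 h2; omega
      have hmono' : ∀ s, i ≤ s → s < k + 1 → a s + 1 < a (s + 1) + 1 := fun s h1 h2 => by
        have := hmono s h1 h2; omega
      constructor
      · rw [partialUpper, hNsum]
        rw [macRepFold_rep _ _ (fun s => a s + 1) i hi1 hik hge' hmono']
        rw [hsum]
        refine Finset.sum_congr rfl fun s hs => ?_
        simp
      · rw [deltaErr, hNsum]
        rw [macRepFold_rep _ _ (fun s => a s + 1) i hi1 hik hge' hmono']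
        refine Finset.sum_eq_zero fun s hs => ?_
        rw [Finset.mem_Icc] at hs
        have := hge s hs.1 hs.2
        rw [if_neg (by omega)]
  · rintro ⟨h1, h2⟩
    rcases Nat.eq_zero_or_pos (n + m) with h0 | hN
    · have hn0 : n = 0 := by omega
      have hm0 : m = 0 := by omega
      subst hn0; subst hm0
      simp [partialLower, macRepFold_zero]
    · obtain ⟨i, b, hi1, hik, hge, hmono, hsum⟩ := exists_rep (k + 1) (n + m) (by omega) hN
      have hU : partialUpper k (n + m) = ∑ s ∈ Icc i (k + 1), (b s - 1).choose s := by
        rw [partialUpper]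
        conv_lhs => rw [hsum]
        exact macRepFold_rep _ _ b i hi1 hik hge hmono
      have hD : deltaErr k (n + m) = ∑ s ∈ Icc i (k + 1), (if b s = s then 1 else 0) := by
        rw [deltaErr]
        conv_lhs => rw [hsum]
        exact macRepFold_rep _ _ b i hi1 hik hge hmono
      have hbs : ∀ s, i ≤ s → s ≤ k + 1 → s + 1 ≤ b s := by
        intro s hs1 hs2
        have hne : b s ≠ s := by
          intro hcontra
          rw [hD] at h2
          rw [Finset.sum_eq_zero_iff] at h2
          have := h2 s (Finset.mem_Icc.mpr ⟨hs1, hs2⟩)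
          rw [if_pos hcontra] at this
          omega
        have := hge s hs1 hs2
        omega
      have hge' : ∀ s, i ≤ s → s ≤ k + 1 → s ≤ b s - 1 := fun s hs1 hs2 => by
        have := hbs s hs1 hs2; omega
      have hmono' : ∀ s, i ≤ s → s < k + 1 → b s - 1 < b (s + 1) - 1 := fun s hs1 hs2 => by
        have h1' := hmono s hs1 hs2
        have h2' := hbs s hs1 (by omega)
        omega
      have hnval : n = ∑ s ∈ Icc i (k + 1), (b s - 1).choose s := by rw [h1, hU]
      have hL : partialLower k n = ∑ s ∈ Icc i (k + 1), (b s - 1).choose (s - 1) := by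
        rw [partialLower]
        conv_lhs => rw [hnval]
        exact macRepFold_rep _ _ (fun s => b s - 1) i hi1 hik hge' hmono'
      have hkey : n + m = n + ∑ s ∈ Icc i (k + 1), (b s - 1).choose (s - 1) := by
        conv_lhs => rw [hsum]
        conv_rhs => rw [hnval, ← Finset.sum_add_distrib]
        refine Finset.sum_congr rfl fun s hs => ?_
        rw [Finset.mem_Icc] at hs
        have hb := hbs s hs.1 hs.2
        obtain ⟨t, rfl⟩ : ∃ t, s = t + 1 := ⟨s - 1, by omega⟩
        obtain ⟨c, hc⟩ : ∃ c, b (t + 1) = c + 1 := ⟨b (t + 1) - 1, by omega⟩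
        rw [hc]
        simp [Nat.choose_succ_succ]
        omega
      rw [hL]
      omega
end

section
/- Let n, m, k be positive integers with k-dimensional representations n = C(a_{k+1},k+1) + C(a_k,k) + ⋯ + C(a_i,i) and m = C(b_{k+1},k+1) + C(b_k,k) + ⋯ + C(b_j,j). Then n < m if and only if either (i > j and a_t = b_t for all t ∈ {i, …, k+1}), or there exists t ∈ {max(i,j), …, k+1} with a_t ≠ b_t and the maximal such index t satisfies a_t < b_t. -/
/-- `IsKRep k n i a` says that `n = C(a_{k+1}, k+1) + ⋯ + C(a_i, i)` is the
`k`-dimensional representation of `n`, i.e. `a_{k+1} > a_k > ⋯ > a_i ≥ i ≥ 1`. -/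
def IsKRep (k n i : ℕ) (a : ℕ → ℕ) : Prop :=
  1 ≤ i ∧ i ≤ k + 1 ∧ i ≤ a i ∧ (∀ t, i ≤ t → t ≤ k → a t < a (t + 1)) ∧
    n = ∑ t ∈ Finset.Icc i (k + 1), Nat.choose (a t) t

/-!
Along a strictly increasing sequence `a`, Pascal's rule telescopes:
`∑_{t=i}^{s} C(a_t, t) < C(a_s + 1, s) ≤ C(b_s, s)` whenever `a_s < b_s`. Hence the largest
index at which two representations differ decides the comparison, and if they agree on their
common range, the one with more terms is the larger.
-/

open Finset

lemma choose_lt_choose_add_one_left {a s : ℕ} (hs : 1 ≤ s) (hsa : s ≤ a) :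
    a.choose s < (a + 1).choose s := by
  obtain ⟨r, rfl⟩ := Nat.exists_eq_add_of_le' hs
  rw [Nat.choose_succ_succ']
  have := Nat.choose_pos (n := a) (k := r) (by omega)
  omega

lemma sum_Icc_choose_lt_choose_add_one {i s : ℕ} {a : ℕ → ℕ} (hi : 1 ≤ i) (hia : i ≤ a i)
    (ha : ∀ t, i ≤ t → t < s → a t < a (t + 1)) (his : i ≤ s) :
    ∑ t ∈ Icc i s, (a t).choose t < (a s + 1).choose s := by
  induction s, his using Nat.le_induction with
  | base => simpa using choose_lt_choose_add_one_left hi hia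
  | succ s hs ih =>
    calc ∑ t ∈ Icc i (s + 1), (a t).choose t
        = ∑ t ∈ Icc i s, (a t).choose t + (a (s + 1)).choose (s + 1) :=
          sum_Icc_succ_top (by omega) _
      _ < (a s + 1).choose s + (a (s + 1)).choose (s + 1) := by
          gcongr
          exact ih fun t hit hts => ha t hit (by omega)
      _ ≤ (a (s + 1)).choose s + (a (s + 1)).choose (s + 1) := by
          gcongr
          exact ha s hs (by omega)
      _ = (a (s + 1) + 1).choose (s + 1) := (Nat.choose_succ_succ _ _).symm

lemma eqOn_or_exists_greatest_ne {α : Type*} (f g : ℕ → α) (l u : ℕ) :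
    (∀ t, l ≤ t → t ≤ u → f t = g t) ∨
      ∃ t₀, l ≤ t₀ ∧ t₀ ≤ u ∧ f t₀ ≠ g t₀ ∧ ∀ t, t₀ < t → t ≤ u → f t = g t := by
  classical
  by_cases h : ∃ t, t ≤ u ∧ l ≤ t ∧ f t ≠ g t
  · obtain ⟨t, htu, hP⟩ := h
    set P : ℕ → Prop := fun t => l ≤ t ∧ f t ≠ g t
    obtain ⟨hlo, hne⟩ : P (Nat.findGreatest P u) := Nat.findGreatest_spec htu hP
    refine Or.inr ⟨_, hlo, Nat.findGreatest_le u, hne, fun t ht htu => ?_⟩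
    by_contra hne'
    exact Nat.findGreatest_is_greatest ht htu ⟨by omega, hne'⟩
  · push Not at h
    exact Or.inl fun t hlt htu => h t htu hlt

namespace IsKRep

variable {k n m i j : ℕ} {a b : ℕ → ℕ}

lemma eq_sum_Ico (h : IsKRep k n i a) : n = ∑ t ∈ Ico i (k + 2), (a t).choose t := by
  rw [h.2.2.2.2, ← Ico_add_one_right_eq_Icc]
  rfl

lemma eq_sum_Icc_add_sum_Ico {s : ℕ} (h : IsKRep k n i a) (his : i ≤ s) (hs : s ≤ k + 1) :
    n = ∑ t ∈ Icc i s, (a t).choose t + ∑ t ∈ Ico (s + 1) (k + 2), (a t).choose t := by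
  rw [h.eq_sum_Ico, ← Ico_add_one_right_eq_Icc, sum_Ico_consecutive _ (by omega) (by omega)]

lemma eq_sum_Ico_add_of_eq_above (ha : IsKRep k n i a) (hb : IsKRep k m j b) (hji : j ≤ i)
    (heq : ∀ t, i ≤ t → t ≤ k + 1 → a t = b t) :
    m = ∑ t ∈ Ico j i, (b t).choose t + n := by
  rw [hb.eq_sum_Ico, ha.eq_sum_Ico, ← sum_Ico_consecutive _ hji (by have := ha.2.1; omega)]
  congr 1
  refine sum_congr rfl fun t ht => ?_
  rw [mem_Ico] at ht
  rw [heq t ht.1 (by omega)]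

lemma le_of_eq_above (ha : IsKRep k n i a) (hb : IsKRep k m j b) (hji : j ≤ i)
    (heq : ∀ t, i ≤ t → t ≤ k + 1 → a t = b t) : n ≤ m := by
  rw [eq_sum_Ico_add_of_eq_above ha hb hji heq]
  exact Nat.le_add_left n _

lemma lt_of_eq_above (ha : IsKRep k n i a) (hb : IsKRep k m j b) (hji : j < i)
    (heq : ∀ t, i ≤ t → t ≤ k + 1 → a t = b t) : n < m := by
  have hpos : 0 < ∑ t ∈ Ico j i, (b t).choose t :=
    sum_pos' (fun _ _ => Nat.zero_le _) ⟨j, by simp [hji], Nat.choose_pos hb.2.2.1⟩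
  rw [eq_sum_Ico_add_of_eq_above ha hb hji.le heq]
  omega

lemma lt_of_lt_of_eq_above {t₀ : ℕ} (ha : IsKRep k n i a) (hb : IsKRep k m j b)
    (hlo : max i j ≤ t₀) (hhi : t₀ ≤ k + 1) (hlt : a t₀ < b t₀)
    (heq : ∀ t, t₀ < t → t ≤ k + 1 → a t = b t) : n < m := by
  have htail : ∑ t ∈ Ico (t₀ + 1) (k + 2), (a t).choose t =
      ∑ t ∈ Ico (t₀ + 1) (k + 2), (b t).choose t := by
    refine sum_congr rfl fun t ht => ?_
    rw [mem_Ico] at ht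
    rw [heq t (by omega) (by omega)]
  calc n = ∑ t ∈ Icc i t₀, (a t).choose t + ∑ t ∈ Ico (t₀ + 1) (k + 2), (a t).choose t :=
        ha.eq_sum_Icc_add_sum_Ico (by omega) hhi
    _ < (a t₀ + 1).choose t₀ + ∑ t ∈ Ico (t₀ + 1) (k + 2), (b t).choose t := by
        rw [htail]
        gcongr
        exact sum_Icc_choose_lt_choose_add_one ha.1 ha.2.2.1
          (fun t hit htt => ha.2.2.2.1 t hit (by omega)) (by omega)
    _ ≤ (b t₀).choose t₀ + ∑ t ∈ Ico (t₀ + 1) (k + 2), (b t).choose t := by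
        gcongr
        exact hlt
    _ ≤ ∑ t ∈ Icc j t₀, (b t).choose t + ∑ t ∈ Ico (t₀ + 1) (k + 2), (b t).choose t := by
        gcongr
        exact single_le_sum (f := fun t => (b t).choose t) (fun _ _ => Nat.zero_le _)
          (mem_Icc.mpr ⟨by omega, le_rfl⟩)
    _ = m := (hb.eq_sum_Icc_add_sum_Ico (by omega) hhi).symm

end IsKRep

theorem lt_iff_rep_lt_general (n m k i j : ℕ) (a b : ℕ → ℕ)
    (ha : IsKRep k n i a) (hb : IsKRep k m j b) :
    n < m ↔
      (j < i ∧ ∀ t, i ≤ t → t ≤ k + 1 → a t = b t) ∨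
      (∃ t₀, max i j ≤ t₀ ∧ t₀ ≤ k + 1 ∧ a t₀ < b t₀ ∧
        ∀ t, t₀ < t → t ≤ k + 1 → a t = b t) := by
  refine ⟨fun hnm => ?_, ?_⟩
  · rcases eqOn_or_exists_greatest_ne a b (max i j) (k + 1) with
      heq | ⟨t₀, hlo, hhi, hne, habove⟩
    · have hji : j < i := lt_of_not_ge fun hij => hnm.not_ge <|
        hb.le_of_eq_above ha hij fun t hjt htk => (heq t (by omega) htk).symm
      exact Or.inl ⟨hji, fun t hit htk => heq t (by omega) htk⟩
    · rcases hne.lt_or_gt with hlt | hgt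
      · exact Or.inr ⟨t₀, hlo, hhi, hlt, habove⟩
      · exact absurd (hb.lt_of_lt_of_eq_above ha (by omega) hhi hgt
          fun t h₁ h₂ => (habove t h₁ h₂).symm) hnm.asymm
  · rintro (⟨hji, heq⟩ | ⟨t₀, hlo, hhi, hlt, habove⟩)
    · exact ha.lt_of_eq_above hb hji heq
    · exact ha.lt_of_lt_of_eq_above hb hlo hhi hlt habove

/-- Lemma 2.2(b): given `k`-dimensional representations of `n` and `m`,
`n < m` iff either `i > j` and `a_t = b_t` for all `t ∈ {i, …, k+1}`, or there is
`t ∈ {max i j, …, k+1}` with `a_t ≠ b_t` and the maximal such `t` satisfies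
`a_t < b_t` (encoded as: there is `t₀` in that range with `a_{t₀} < b_{t₀}` and
`a_t = b_t` for every `t` in the range above `t₀`). -/
theorem lt_iff_rep_lt (n m k i j : ℕ) (a b : ℕ → ℕ)
    (hn : 1 ≤ n) (hm : 1 ≤ m) (hk : 1 ≤ k)
    (ha : IsKRep k n i a) (hb : IsKRep k m j b) :
    n < m ↔
      (j < i ∧ ∀ t, i ≤ t → t ≤ k + 1 → a t = b t) ∨
      (∃ t₀, max i j ≤ t₀ ∧ t₀ ≤ k + 1 ∧ a t₀ < b t₀ ∧
        ∀ t, t₀ < t → t ≤ k + 1 → a t = b t) :=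
  lt_iff_rep_lt_general n m k i j a b ha hb
end

section
/- Let n, m be nonnegative integers and k ≥ 0. If d^k(n) ≤ m, then n ≤ ∂^k(m). -/
lemma macRepFold_succ (g : ℕ → ℕ → ℕ) (t n : ℕ) (hn : n ≠ 0) :
    macRepFold g (t+1) n =
      g (Nat.findGreatest (fun a => Nat.choose a (t+1) ≤ n) (n + t + 1)) (t+1)
      + macRepFold g t
        (n - Nat.choose (Nat.findGreatest (fun a => Nat.choose a (t+1) ≤ n) (n + t + 1)) (t+1)) := by
  simp [macRepFold, hn]

lemma lt_choose_add (n s : ℕ) (hs : 1 ≤ s) : n < Nat.choose (n + s) s := by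
  induction s with
  | zero => omega
  | succ s ih =>
    rcases Nat.eq_zero_or_pos s with hs0 | hsp
    · subst hs0; simp
    · have h := ih hsp
      rw [show n + (s+1) = (n + s) + 1 by ring, Nat.choose_succ_succ]
      omega

section Greedy

variable (t n : ℕ)

/-- the greedy index at level `t+1` -/
noncomputable def grA : ℕ := Nat.findGreatest (fun a => Nat.choose a (t+1) ≤ n) (n + t + 1)

variable (hn : n ≠ 0)
include hn

lemma grA_ge : t + 1 ≤ grA t n := by
  apply Nat.le_findGreatest (by omega)
  simp only [Nat.choose_self]; omega

lemma grA_choose_le : Nat.choose (grA t n) (t+1) ≤ n := by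
  have : (fun a => Nat.choose a (t+1) ≤ n) (t+1) := by
    simp only [Nat.choose_self]; omega
  exact Nat.findGreatest_spec (P := fun a => Nat.choose a (t+1) ≤ n) (by omega) this

lemma grA_lt : grA t n < n + t + 1 := by
  have h1 : grA t n ≤ n + t + 1 := Nat.findGreatest_le _
  rcases h1.lt_or_eq with h | h
  · exact h
  · exfalso
    have h2 := grA_choose_le t n hn
    rw [h] at h2
    have := lt_choose_add n (t+1) (by omega)
    rw [show n + (t+1) = n + t + 1 by ring] at this
    omega

lemma grA_succ_gt : n < Nat.choose (grA t n + 1) (t+1) := by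
  by_contra h
  push_neg at h
  have hlt := grA_lt t n hn
  unfold grA at hlt h
  exact Nat.findGreatest_is_greatest (P := fun a => Nat.choose a (t+1) ≤ n)
    (Nat.lt_succ_self _) (by omega) h

omit hn

/-- if `C(c, t+1) ≤ m` then `c ≤ grA t m` -/
lemma le_grA (m c : ℕ) (h : Nat.choose c (t+1) ≤ m) : c ≤ grA t m := by
  have hcm : c ≤ m + t + 1 := by
    by_contra hlt
    push_neg at hlt
    have h1 : Nat.choose (m + t + 1) (t+1) ≤ Nat.choose c (t+1) :=
      Nat.choose_le_choose _ (by omega)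
    have h2 := lt_choose_add m (t+1) (by omega)
    rw [show m + (t+1) = m + t + 1 by ring] at h2
    omega
  exact Nat.le_findGreatest hcm h

end Greedy

lemma key : ∀ t n m, macRepFold (fun a t => Nat.choose (a+1) t) t n ≤ m →
    (t = 0 → n = 0) → n ≤ macRepFold (fun a t => Nat.choose (a-1) t) t m := by
  intro t
  induction t with
  | zero => intro n m _ h2; omega
  | succ t ih =>
    intro n m h1 _
    rcases Nat.eq_zero_or_pos n with hn | hn
    · omega
    have hn' : n ≠ 0 := by omega
    have hale := grA_choose_le t n hn'
    have halt := grA_succ_gt t n hn'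
    have hage := grA_ge t n hn'
    set a := grA t n with ha
    rw [macRepFold_succ _ _ _ hn'] at h1
    change Nat.choose (a+1) (t+1) + macRepFold _ t (n - Nat.choose a (t+1)) ≤ m at h1
    -- r := remainder
    set r := n - Nat.choose a (t+1) with hr
    have hrlt : r < Nat.choose a t := by
      have hp : Nat.choose (a+1) (t+1) = Nat.choose a t + Nat.choose a (t+1) :=
        Nat.choose_succ_succ a t
      omega
    have hcm : Nat.choose (a+1) (t+1) ≤ m := le_trans (Nat.le_add_right _ _) h1
    have hb : a + 1 ≤ grA t m := le_grA t m (a+1) hcm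
    have hm' : m ≠ 0 := by
      have : 0 < Nat.choose (a+1) (t+1) := Nat.choose_pos (by omega)
      omega
    clear_value a
    set b := grA t m with hbdef
    rw [macRepFold_succ _ _ _ hm']
    change n ≤ Nat.choose (b-1) (t+1) + macRepFold _ t (m - Nat.choose b (t+1))
    rcases eq_or_lt_of_le hb with hba | hba
    · -- b = a + 1
      have hbb : b - 1 = a := by omega
      rw [hbb, ← hba]
      have ihr : r ≤ macRepFold (fun a t => Nat.choose (a-1) t) t (m - Nat.choose (a+1) (t+1)) := by
        apply ih
        · omega
        · intro ht0
          subst ht0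
          simpa using hrlt
      omega
    · -- b ≥ a + 2
      have : n < Nat.choose (b-1) (t+1) := by
        calc n < Nat.choose (a+1) (t+1) := halt
        _ ≤ Nat.choose (b-1) (t+1) := Nat.choose_le_choose _ (by omega)
      omega

/-- Lemma 2.5(a), first part: if `d^k(n) ≤ m` then `n ≤ ∂^k(m)`. -/
theorem le_partialUpper_of_dUpper_le (k n m : ℕ) (h : dUpper k n ≤ m) :
    n ≤ partialUpper k m :=
  key (k+1) n m h (by omega)
end

section
/- Let f = (f_0, f_1, …) be an eventually-zero sequence of nonnegative integers and for each k ≥ 0 define ψ_k(f) = ∂^k(f_k) + ∂^{k+1}(f_{k+1}) − f_{k+1}. Let g be the sequence with g_0 = f_0 and g_k = f_k − δ_k(f_k) for k ≥ 1. Then for every k ≥ 0, ψ_k(g) = ψ_k(f) + δ_{k+1}(f_{k+1}). -/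
/-- Guarantees that the search bound `n + t + 1` in `greedyCoeff` is never the binding one. -/
lemma Nat.sub_le_choose_succ (a t : ℕ) : a - t ≤ a.choose (t + 1) := by
  rcases le_or_gt a t with h | h
  · simp [Nat.sub_eq_zero_of_le h]
  · calc a - t = (a - (t + 1) + 1).choose (a - (t + 1)) := by
          rw [Nat.choose_succ_self_right]; omega
      _ ≤ a.choose (a - (t + 1)) := Nat.choose_le_choose _ (by omega)
      _ = a.choose (t + 1) := Nat.choose_symm h

/-- The greedy choice of `a_{t+1}` made by `macRepFold` at level `t + 1`. -/
def greedyCoeff (t n : ℕ) : ℕ := Nat.findGreatest (fun a => a.choose (t + 1) ≤ n) (n + t + 1)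

section Greedy

variable {t n a : ℕ}

lemma greedyCoeff_eq (hle : a.choose (t + 1) ≤ n) (hlt : n < (a + 1).choose (t + 1)) :
    greedyCoeff t n = a := by
  have ha : a ≤ n + t + 1 := by have := Nat.sub_le_choose_succ a t; omega
  refine le_antisymm (not_lt.1 fun h => ?_) (Nat.le_findGreatest ha hle)
  have hspec : (greedyCoeff t n).choose (t + 1) ≤ n :=
    Nat.findGreatest_spec (P := fun a => a.choose (t + 1) ≤ n) ha hle
  have := Nat.choose_le_choose (t + 1) (show a + 1 ≤ greedyCoeff t n from h)
  omega

lemma succ_le_greedyCoeff (hn : n ≠ 0) : t + 1 ≤ greedyCoeff t n :=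
  Nat.le_findGreatest (P := fun a => a.choose (t + 1) ≤ n) (by omega)
    (by simp only [Nat.choose_self]; omega)

lemma choose_greedyCoeff_le (hn : n ≠ 0) : (greedyCoeff t n).choose (t + 1) ≤ n :=
  Nat.findGreatest_spec (P := fun a => a.choose (t + 1) ≤ n) (m := t + 1) (by omega)
    (by simp only [Nat.choose_self]; omega)

lemma lt_choose_greedyCoeff_succ : n < (greedyCoeff t n + 1).choose (t + 1) := by
  by_contra! h
  have hle : greedyCoeff t n + 1 ≤ n + t + 1 := by
    have := Nat.sub_le_choose_succ (greedyCoeff t n + 1) t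
    omega
  exact Nat.findGreatest_is_greatest (P := fun a => a.choose (t + 1) ≤ n) (Nat.lt_succ_self _)
    hle h

lemma greedyCoeff_of_le (hn : n ≠ 0) (h : n ≤ t + 1) : greedyCoeff t n = t + 1 :=
  greedyCoeff_eq (by rw [Nat.choose_self]; omega)
    (by rw [Nat.choose_succ_self_right]; omega)

end Greedy

section MacRepFold

variable {g : ℕ → ℕ → ℕ}

lemma macRepFold_succ_of_ne_zero {t n : ℕ} (hn : n ≠ 0) :
    macRepFold g (t + 1) n =
      g (greedyCoeff t n) (t + 1) + macRepFold g t (n - (greedyCoeff t n).choose (t + 1)) := by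
  rw [macRepFold, if_neg hn]
  rfl

/-- For `n ≤ t` the representation is `n = C(t, t) + C(t - 1, t - 1) + ⋯ + C(t-n+1, t-n+1)`. -/
lemma macRepFold_of_le :
    ∀ {t n : ℕ}, n ≤ t → macRepFold g t n = ∑ i ∈ Finset.range n, g (t - i) (t - i)
  | 0, n, h => by simp [Nat.le_zero.1 h, macRepFold]
  | t + 1, 0, _ => by simp [macRepFold]
  | t + 1, m + 1, h => by
    rw [macRepFold_succ_of_ne_zero m.succ_ne_zero, greedyCoeff_of_le m.succ_ne_zero h,
      Nat.choose_self, Nat.succ_sub_one, macRepFold_of_le (by omega), Finset.sum_range_succ',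
      add_comm]
    simp

lemma macRepFold_le (hg : ∀ a s, g a s ≤ a.choose s) : ∀ t n, macRepFold g t n ≤ n
  | 0, _ => by simp [macRepFold]
  | t + 1, n => by
    rcases eq_or_ne n 0 with rfl | hn
    · simp [macRepFold]
    rw [macRepFold_succ_of_ne_zero hn]
    have := macRepFold_le hg t (n - (greedyCoeff t n).choose (t + 1))
    have := choose_greedyCoeff_le (t := t) hn
    have := hg (greedyCoeff t n) (t + 1)
    omega

lemma macRepFold_eq_zero_of_le (hg : ∀ s, g (s + 1) (s + 1) = 0) {t n : ℕ} (h : n ≤ t) :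
    macRepFold g t n = 0 := by
  rw [macRepFold_of_le h]
  refine Finset.sum_eq_zero fun i hi => ?_
  rw [Finset.mem_range] at hi
  rw [show t - i = t - i - 1 + 1 by omega, hg]

end MacRepFold

/-- `diagCount t n` is `δ_{t-1}(n)`, the number of terms with `a_s = s`. -/
def diagCount (t n : ℕ) : ℕ := macRepFold (fun a s => if a = s then 1 else 0) t n

lemma diagCount_le (t n : ℕ) : diagCount t n ≤ n :=
  macRepFold_le (fun a s => by split_ifs with h <;> simp [h]) t n

lemma diagCount_of_le {t n : ℕ} (h : n ≤ t) : diagCount t n = n := by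
  simp [diagCount, macRepFold_of_le h]

/-- Terms with `a_s = s` form a tail of the representation and each contributes `C(s, s) = 1`
to `n`; deleting them gives the representation of `n - δ`, on which `g` sees no difference. -/
lemma macRepFold_sub_diagCount {g : ℕ → ℕ → ℕ} (hg : ∀ s, g (s + 1) (s + 1) = 0) :
    ∀ t n, macRepFold g t (n - diagCount t n) = macRepFold g t n
  | 0, _ => by simp [macRepFold]
  | t + 1, n => by
    rcases eq_or_ne n 0 with rfl | hn
    · simp [macRepFold]
    set a := greedyCoeff t n with ha
    have ha_ge : t + 1 ≤ a := succ_le_greedyCoeff hn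
    have hn_lt : n < (a + 1).choose (t + 1) := lt_choose_greedyCoeff_succ
    rcases eq_or_ne a (t + 1) with hat | hat
    · have hn_le : n ≤ t + 1 := by
        rw [hat, Nat.choose_succ_self_right] at hn_lt
        omega
      rw [diagCount_of_le hn_le, Nat.sub_self, macRepFold_eq_zero_of_le hg hn_le,
        macRepFold_eq_zero_of_le hg (Nat.zero_le _)]
    set c := a.choose (t + 1)
    have hc_le : c ≤ n := choose_greedyCoeff_le hn
    have hc_pos : 0 < c := Nat.choose_pos ha_ge
    set r := n - c
    have hdiag : diagCount (t + 1) n = diagCount t r := by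
      rw [diagCount, macRepFold_succ_of_ne_zero hn, ← ha, if_neg hat, zero_add, diagCount]
    have hdiag_le : diagCount t r ≤ r := diagCount_le t r
    have hm : greedyCoeff t (n - diagCount t r) = a := greedyCoeff_eq (by omega) (by omega)
    rw [hdiag, macRepFold_succ_of_ne_zero (by omega), hm, macRepFold_succ_of_ne_zero hn, ← ha,
      show n - diagCount t r - c = r - diagCount t r by omega, macRepFold_sub_diagCount hg t r]

lemma deltaErr_le (k n : ℕ) : deltaErr k n ≤ n :=
  diagCount_le (k + 1) n

lemma partialUpper_sub_deltaErr (k n : ℕ) :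
    partialUpper k (n - deltaErr k n) = partialUpper k n :=
  macRepFold_sub_diagCount (fun s => by simp) (k + 1) n

theorem psi_sub_delta_general (f : ℕ → ℕ)
    (g : ℕ → ℕ) (hg0 : g 0 = f 0) (hg : ∀ k, 1 ≤ k → g k = f k - deltaErr k (f k)) :
    ∀ k : ℕ,
      (partialUpper k (g k) : ℤ) + (partialUpper (k + 1) (g (k + 1)) : ℤ) - (g (k + 1) : ℤ) =
        ((partialUpper k (f k) : ℤ) + (partialUpper (k + 1) (f (k + 1)) : ℤ)
            - (f (k + 1) : ℤ)) + (deltaErr (k + 1) (f (k + 1)) : ℤ) := by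
  intro k
  have hk : partialUpper k (g k) = partialUpper k (f k) := by
    rcases k.eq_zero_or_pos with rfl | hk
    · rw [hg0]
    · rw [hg k hk, partialUpper_sub_deltaErr]
  have hsucc : g (k + 1) = f (k + 1) - deltaErr (k + 1) (f (k + 1)) := hg (k + 1) k.succ_pos
  rw [hk, hsucc, partialUpper_sub_deltaErr, Nat.cast_sub (deltaErr_le _ _)]
  ring

/-- Key computation in Theorem 1.4 (f*): with
`ψ_k(h) = ∂^k(h_k) + ∂^{k+1}(h_{k+1}) − h_{k+1}` and `g = f − δ(f)`
(i.e. `g_0 = f_0` and `g_k = f_k − δ_k(f_k)` for `k ≥ 1`), one has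
`ψ_k(g) = ψ_k(f) + δ_{k+1}(f_{k+1})` for every `k ≥ 0`. -/
theorem psi_sub_delta (f : ℕ → ℕ) (hf : ∃ N, ∀ j, N ≤ j → f j = 0)
    (g : ℕ → ℕ) (hg0 : g 0 = f 0) (hg : ∀ k, 1 ≤ k → g k = f k - deltaErr k (f k)) :
    ∀ k : ℕ,
      (partialUpper k (g k) : ℤ) + (partialUpper (k + 1) (g (k + 1)) : ℤ) - (g (k + 1) : ℤ) =
        ((partialUpper k (f k) : ℤ) + (partialUpper (k + 1) (f (k + 1)) : ℤ)
            - (f (k + 1) : ℤ)) + (deltaErr (k + 1) (f (k + 1)) : ℤ) :=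
  psi_sub_delta_general f g hg0 hg
end
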